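/- Let A = (T_{j−k}) be an upper triangular Toeplitz matrix with entries in B(H) with sup_{l≥0}‖T_l‖ < ∞, and G_A(z) = ∑_{l≥0}T_l z^l. Then A ∈ B(ℓ²(H)) if and only if G_A ∈ H^∞(𝔻, B(H)), and in that case ‖A‖_{B(ℓ²(H))} = sup_{|z|<1}‖G_A(z)‖_{B(H)}. -/

import Mathlib

open Finset Filter

noncomputable section

variable {H : Type*} [NormedAddCommGroup H] [InnerProductSpace ℂ H]
  [CompleteSpace H] [TopologicalSpace.SeparableSpace H]

/-- `A` defines a bounded operator on `ℓ²(H)` with norm at most `C`, expressed through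
uniform bounds of the associated bilinear form on finitely supported sequences. -/
def SchurBoundedBy (A : ℕ → ℕ → (H →L[ℂ] H)) (C : ℝ) : Prop :=
  ∀ (F G : Finset ℕ) (x y : ℕ → H),
    ‖∑ k ∈ G, ∑ j ∈ F, (inner ℂ (A k j (x j)) (y k) : ℂ)‖ ≤
      C * Real.sqrt (∑ j ∈ F, ‖x j‖ ^ 2) * Real.sqrt (∑ k ∈ G, ‖y k‖ ^ 2)

/-- `A ∈ B(ℓ²(H))`. -/
def MemB (A : ℕ → ℕ → (H →L[ℂ] H)) : Prop :=
  ∃ C, 0 ≤ C ∧ SchurBoundedBy A C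

/-- The Schur product of two operator matrices: entrywise composition. -/
def schur (A B : ℕ → ℕ → (H →L[ℂ] H)) : ℕ → ℕ → (H →L[ℂ] H) :=
  fun k j => (A k j).comp (B k j)

/-- `A` is a right Schur multiplier with multiplier norm at most `C`. -/
def MrBoundedBy (A : ℕ → ℕ → (H →L[ℂ] H)) (C : ℝ) : Prop :=
  ∀ (B : ℕ → ℕ → (H →L[ℂ] H)) (D : ℝ), 0 ≤ D → SchurBoundedBy B D →
    SchurBoundedBy (schur B A) (C * D)

/-- `A` is a left Schur multiplier with multiplier norm at most `C`. -/
def MlBoundedBy (A : ℕ → ℕ → (H →L[ℂ] H)) (C : ℝ) : Prop :=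
  ∀ (B : ℕ → ℕ → (H →L[ℂ] H)) (D : ℝ), 0 ≤ D → SchurBoundedBy B D →
    SchurBoundedBy (schur A B) (C * D)

/-- `A ∈ M_r(ℓ²(H))`. -/
def MemMr (A : ℕ → ℕ → (H →L[ℂ] H)) : Prop :=
  ∃ C, 0 ≤ C ∧ MrBoundedBy A C

/-- `A ∈ M_l(ℓ²(H))`. -/
def MemMl (A : ℕ → ℕ → (H →L[ℂ] H)) : Prop :=
  ∃ C, 0 ≤ C ∧ MlBoundedBy A C

/-- A matrix polynomial: supported on finitely many diagonals, with uniformly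
bounded operator entries. -/
def IsMatPoly (A : ℕ → ℕ → (H →L[ℂ] H)) : Prop :=
  (∃ N : ℕ, ∀ k j : ℕ, N < ((j : ℤ) - (k : ℤ)).natAbs → A k j = 0) ∧
    ∃ M : ℝ, ∀ k j : ℕ, ‖A k j‖ ≤ M

/-- `A ∈ L¹_r(ℓ²(H))`: `A` is a right Schur multiplier lying in the closure of the
matrix polynomials in the right multiplier norm. -/
def MemL1r (A : ℕ → ℕ → (H →L[ℂ] H)) : Prop :=
  MemMr A ∧ ∀ ε : ℝ, 0 < ε → ∃ P : ℕ → ℕ → (H →L[ℂ] H),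
    IsMatPoly P ∧ MrBoundedBy (fun k j => A k j - P k j) ε

/-- `A ∈ L¹_l(ℓ²(H))`: `A` is a left Schur multiplier lying in the closure of the
matrix polynomials in the left multiplier norm. -/
def MemL1l (A : ℕ → ℕ → (H →L[ℂ] H)) : Prop :=
  MemMl A ∧ ∀ ε : ℝ, 0 < ε → ∃ P : ℕ → ℕ → (H →L[ℂ] H),
    IsMatPoly P ∧ MlBoundedBy (fun k j => A k j - P k j) ε

/-!
On a geometric vector `(z ^ j • u)_j` with `‖z‖ < 1` the matrix `A` acts as multiplication by
`G_A(z)`, so `‖G_A(z)‖ ≤ ‖A‖`. Conversely, for `0 ≤ r < 1` a finite section of the Poisson mean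
`P_r(A)` is a finite section of the Toeplitz matrix of the polynomial `∑_{l<n} r^l z^l T_l`.
Sampling at the `(2n+1)`-th roots of unity and the discrete Parseval identity bound it by the sup
of this polynomial on the unit circle, which is at most `sup_𝔻 ‖G_A‖ + O(rⁿ)`. Letting `n → ∞` and
then `r → 1` gives `‖A‖ ≤ sup_𝔻 ‖G_A‖`.
-/

open Topology

section PowerSeries

variable {V : Type*} [NormedAddCommGroup V] [NormedSpace ℂ V] [CompleteSpace V]
  {T : ℕ → V} {M : ℝ} {z : ℂ}

theorem summable_pow_smul_of_norm_le (hM : ∀ l, ‖T l‖ ≤ M) (hz : ‖z‖ < 1) :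
    Summable fun l => z ^ l • T l :=
  .of_norm_bounded ((summable_geometric_of_lt_one (norm_nonneg z) hz).mul_left M) fun l => by
    rw [norm_smul, norm_pow, mul_comm]
    exact mul_le_mul_of_nonneg_right (hM l) (by positivity)

theorem norm_tsum_pow_smul_sub_sum_range_le (hM : ∀ l, ‖T l‖ ≤ M) (hz : ‖z‖ < 1) (n : ℕ) :
    ‖∑' l, z ^ l • T l - ∑ l ∈ range n, z ^ l • T l‖ ≤ M * ‖z‖ ^ n / (1 - ‖z‖) := by
  rw [← (summable_pow_smul_of_norm_le hM hz).sum_add_tsum_nat_add n, add_sub_cancel_left,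
    div_eq_mul_inv]
  refine tsum_of_norm_bounded
    ((hasSum_geometric_of_lt_one (norm_nonneg z) hz).mul_left (M * ‖z‖ ^ n)) fun l => ?_
  rw [norm_smul, norm_pow, pow_add, mul_comm]
  calc ‖T (l + n)‖ * (‖z‖ ^ l * ‖z‖ ^ n) ≤ M * (‖z‖ ^ l * ‖z‖ ^ n) :=
        mul_le_mul_of_nonneg_right (hM _) (by positivity)
    _ = M * ‖z‖ ^ n * ‖z‖ ^ l := by ring

end PowerSeries

section SchurBound

variable {E : Type*} [NormedAddCommGroup E] [InnerProductSpace ℂ E]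

def upperToeplitz (T : ℕ → (E →L[ℂ] E)) (k j : ℕ) : E →L[ℂ] E :=
  if k ≤ j then T (j - k) else 0

theorem norm_upperToeplitz_le {T : ℕ → (E →L[ℂ] E)} {M : ℝ} (hM : ∀ l, ‖T l‖ ≤ M) (k j : ℕ) :
    ‖upperToeplitz T k j‖ ≤ M := by
  unfold upperToeplitz
  split_ifs
  · exact hM _
  · simpa using (norm_nonneg _).trans (hM 0)

theorem SchurBoundedBy.of_tendsto {ι : Type*} {l : Filter ι} [l.NeBot]
    {A : ι → ℕ → ℕ → (E →L[ℂ] E)} {B : ℕ → ℕ → (E →L[ℂ] E)} {C : ℝ}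
    (hA : ∀ k j, Tendsto (fun i => A i k j) l (𝓝 (B k j)))
    (hbound : ∀ᶠ i in l, SchurBoundedBy (A i) C) : SchurBoundedBy B C := by
  intro F G x y
  refine le_of_tendsto ?_ (hbound.mono fun i hi => hi F G x y)
  refine (tendsto_finsetSum _ fun k _ => tendsto_finsetSum _ fun j _ => ?_).norm
  exact (((ContinuousLinearMap.apply ℂ E (x j)).continuous.tendsto _).comp (hA k j)).inner
    tendsto_const_nhds

theorem SchurBoundedBy.norm_le_of_hasSum {A : ℕ → ℕ → (E →L[ℂ] E)} {C : ℝ}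
    (hA : SchurBoundedBy A C) {x y : ℕ → E} {X Y : ℝ} {s : ℂ}
    (hx : HasSum (fun j => ‖x j‖ ^ 2) X) (hy : HasSum (fun k => ‖y k‖ ^ 2) Y)
    (hs : HasSum (fun p : ℕ × ℕ => inner ℂ (A p.1 p.2 (x p.2)) (y p.1)) s) :
    ‖s‖ ≤ C * √X * √Y := by
  have hsquares : Tendsto (fun n => range n ×ˢ range n) atTop atTop :=
    tendsto_atTop_finset_of_monotone
      (fun _ _ h => product_subset_product (range_mono h) (range_mono h))
      fun p => ⟨max p.1 p.2 + 1, by simp⟩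
  refine le_of_tendsto_of_tendsto' (hs.comp hsquares).norm
    ((hx.tendsto_sum_nat.sqrt.const_mul C).mul hy.tendsto_sum_nat.sqrt) fun n => ?_
  simpa [Function.comp_def, sum_product] using hA (range n) (range n) x y

end SchurBound

section EasyDirection

variable {E : Type*} [NormedAddCommGroup E] [InnerProductSpace ℂ E] [CompleteSpace E]
  {T : ℕ → (E →L[ℂ] E)} {M C : ℝ}

theorem hasSum_upperToeplitz_apply_pow_smul {z : ℂ} (hM : ∀ l, ‖T l‖ ≤ M) (hz : ‖z‖ < 1) (u : E)
    (k : ℕ) :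
    HasSum (fun j => upperToeplitz T k j (z ^ j • u)) (z ^ k • (∑' l, z ^ l • T l) u) := by
  rw [← hasSum_nat_add_iff' k, sum_eq_zero fun i hi => by
    simp [upperToeplitz, not_le.2 (mem_range.1 hi)], sub_zero]
  convert (((summable_pow_smul_of_norm_le hM hz).hasSum).mapL
    (ContinuousLinearMap.apply ℂ E u)).const_smul (z ^ k) using 1
  · ext j
    simp [upperToeplitz, pow_add, smul_smul, mul_comm]
  · rfl

theorem norm_tsum_pow_smul_le_of_schurBoundedBy (hM : ∀ l, ‖T l‖ ≤ M) (hC : 0 ≤ C)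
    (hA : SchurBoundedBy (upperToeplitz T) C) {z : ℂ} (hz : ‖z‖ < 1) :
    ‖∑' l, z ^ l • T l‖ ≤ C := by
  set q := ‖z‖ ^ 2
  have hq : q < 1 := pow_lt_one₀ (norm_nonneg z) hz two_ne_zero
  refine ContinuousLinearMap.opNorm_le_of_re_inner_le hC fun u v hu hv =>
    (RCLike.re_le_norm _).trans ?_
  set w := inner ℂ ((∑' l, z ^ l • T l) u) v
  have hgeom : ∀ x : E, ‖x‖ = 1 → HasSum (fun j => ‖z ^ j • x‖ ^ 2) (1 - q)⁻¹ := fun x hx => by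
    convert hasSum_geometric_of_lt_one (sq_nonneg ‖z‖) hq using 2 with j
    rw [norm_smul, hx, mul_one, norm_pow, ← pow_mul, ← pow_mul, mul_comm]
  have hrow : ∀ k, HasSum (fun j => inner ℂ (upperToeplitz T k j (z ^ j • u)) (z ^ k • v))
      ((q ^ k : ℝ) * w) := fun k => by
    have h := (hasSum_upperToeplitz_apply_pow_smul hM hz u k).mapL (innerSLFlip ℂ (z ^ k • v))
    have hcoef : z ^ k * (starRingEnd ℂ) (z ^ k) = ((q ^ k : ℝ) : ℂ) := by
      rw [Complex.mul_conj, Complex.normSq_eq_norm_sq, norm_pow, ← pow_mul, mul_comm, pow_mul]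
    simpa only [Function.comp_def, innerSLFlip_apply_apply, inner_smul_left, inner_smul_right,
      ← mul_assoc, hcoef] using h
  have hsummable : Summable fun p : ℕ × ℕ =>
      inner ℂ (upperToeplitz T p.1 p.2 (z ^ p.2 • u)) (z ^ p.1 • v) := by
    have hg := summable_geometric_of_lt_one (norm_nonneg z) hz
    refine .of_norm_bounded (((hg.mul_of_nonneg hg (fun _ => by positivity)
      fun _ => by positivity)).mul_left M) fun p => ?_
    calc _ ≤ ‖upperToeplitz T p.1 p.2 (z ^ p.2 • u)‖ * ‖z ^ p.1 • v‖ := norm_inner_le_norm _ _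
      _ ≤ M * ‖z ^ p.2 • u‖ * ‖z ^ p.1 • v‖ := by
        gcongr
        exact (ContinuousLinearMap.le_opNorm _ _).trans
          (mul_le_mul_of_nonneg_right (norm_upperToeplitz_le hM _ _) (norm_nonneg _))
      _ = M * (‖z‖ ^ p.1 * ‖z‖ ^ p.2) := by simp [norm_smul, hu, hv]; ring
  have hsum : HasSum (fun k => ((q ^ k : ℝ) : ℂ) * w) (((1 - q)⁻¹ : ℝ) * w) :=
    (Complex.hasSum_ofReal.mpr (hasSum_geometric_of_lt_one (sq_nonneg _) hq)).mul_right w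
  have hbound := hA.norm_le_of_hasSum (hgeom u hu) (hgeom v hv)
    ((hsummable.hasSum.prod_fiberwise hrow).unique hsum ▸ hsummable.hasSum)
  have hpos : 0 < (1 - q)⁻¹ := inv_pos.2 (by linarith)
  rw [norm_mul, Complex.norm_real, Real.norm_of_nonneg hpos.le, mul_assoc,
    Real.mul_self_sqrt hpos.le, mul_comm] at hbound
  exact le_of_mul_le_mul_right hbound hpos

end EasyDirection

section Sampling

variable {N : ℕ} {ω : ℂ}

theorem IsPrimitiveRoot.sum_conj_pow_mul_pow (hω : IsPrimitiveRoot ω N) {a b : ℕ}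
    (ha : a < N) (hb : b < N) :
    ∑ m ∈ range N, (starRingEnd ℂ) ((ω ^ m) ^ b) * (ω ^ m) ^ a = if a = b then (N : ℂ) else 0 := by
  have hunit : ∀ c : ℕ, ‖ω ^ c‖ = 1 := fun c => by
    rw [norm_pow, hω.norm'_eq_one (by omega), one_pow]
  set ζ := (starRingEnd ℂ) (ω ^ b) * ω ^ a
  have hterm : ∀ m, (starRingEnd ℂ) ((ω ^ m) ^ b) * (ω ^ m) ^ a = ζ ^ m := fun m => by
    rw [mul_pow, ← map_pow, ← pow_mul, ← pow_mul, ← pow_mul, ← pow_mul, mul_comm b, mul_comm a]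
  simp only [hterm]
  split_ifs with hab
  · subst hab
    simp [ζ, RCLike.conj_mul, hunit]
  · have hζ : ζ ≠ 1 := by
      change (starRingEnd ℂ) (ω ^ b) * ω ^ a ≠ 1
      rw [← Complex.inv_eq_conj (hunit b), Ne,
        inv_mul_eq_one₀ (pow_ne_zero _ (hω.ne_zero (by omega)))]
      exact fun h => hab (hω.pow_inj ha hb h.symm)
    have hζN : ζ ^ N = 1 := by
      rw [mul_pow, ← map_pow, ← pow_mul, ← pow_mul, mul_comm b, mul_comm a, pow_mul, pow_mul,
        hω.pow_eq_one, one_pow, one_pow, map_one, one_mul]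
    rw [geom_sum_eq hζ, hζN, sub_self, zero_div]

variable {E : Type*} [NormedAddCommGroup E] [InnerProductSpace ℂ E]

theorem IsPrimitiveRoot.sum_inner_sum_pow_smul (hω : IsPrimitiveRoot ω N) {ι κ : Type*}
    {F : Finset ι} {G : Finset κ} {a : ι → ℕ} {b : κ → ℕ} (ha : ∀ i ∈ F, a i < N)
    (hb : ∀ k ∈ G, b k < N) (x : ι → E) (y : κ → E) :
    ∑ m ∈ range N, inner ℂ (∑ i ∈ F, (ω ^ m) ^ a i • x i) (∑ k ∈ G, (ω ^ m) ^ b k • y k) =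
      N * ∑ k ∈ G, ∑ i ∈ F, if b k = a i then inner ℂ (x i) (y k) else 0 := by
  simp only [sum_inner, inner_sum, inner_smul_left, inner_smul_right, mul_sum]
  rw [sum_comm (s := range N)]
  refine sum_congr rfl fun k hk => ?_
  rw [sum_comm (s := range N)]
  refine sum_congr rfl fun i hi => ?_
  simp only [← mul_assoc, mul_comm _ ((starRingEnd ℂ) _)]
  rw [← sum_mul, hω.sum_conj_pow_mul_pow (hb k hk) (ha i hi)]
  split_ifs <;> simp

theorem IsPrimitiveRoot.sum_norm_sq_sum_pow_smul (hω : IsPrimitiveRoot ω N) {F : Finset ℕ}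
    (hF : F ⊆ range N) (x : ℕ → E) :
    ∑ m ∈ range N, ‖∑ j ∈ F, (ω ^ m) ^ j • x j‖ ^ 2 = N * ∑ j ∈ F, ‖x j‖ ^ 2 := by
  have h := hω.sum_inner_sum_pow_smul (a := id) (b := id) (fun j hj => mem_range.1 (hF hj))
    (fun j hj => mem_range.1 (hF hj)) x x
  apply Complex.ofReal_injective
  push_cast
  simpa [sum_ite_eq', inner_self_eq_norm_sq_to_K] using h

theorem sum_range_ite_inner_eq_upperToeplitz (S : ℕ → (E →L[ℂ] E)) {n j : ℕ} (hj : j < n)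
    (k : ℕ) (u v : E) :
    ∑ l ∈ range n, (if l + k = j then inner ℂ (S l u) v else 0) =
      inner ℂ (upperToeplitz S k j u) v := by
  unfold upperToeplitz
  split_ifs with hkj
  · rw [sum_eq_single_of_mem (j - k) (mem_range.2 (by omega)) fun l _ hl => if_neg (by omega),
      if_pos (by omega)]
  · exact (sum_eq_zero fun l _ => if_neg (by omega)).trans (by simp)

-- `2 * n ≤ N` prevents aliasing: the exponents `l + k` and `j` that get compared stay below `N`.
theorem sum_inner_apply_sum_pow_smul_eq (S : ℕ → (E →L[ℂ] E)) {n N : ℕ} {ω : ℂ}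
    (hω : IsPrimitiveRoot ω N) (hnN : 2 * n ≤ N) {F G : Finset ℕ} (hF : F ⊆ range n)
    (hG : G ⊆ range n) (x y : ℕ → E) :
    ∑ m ∈ range N, inner ℂ ((∑ l ∈ range n, (starRingEnd ℂ) (ω ^ m) ^ l • S l)
        (∑ j ∈ F, (ω ^ m) ^ j • x j)) (∑ k ∈ G, (ω ^ m) ^ k • y k) =
      N * ∑ k ∈ G, ∑ j ∈ F, inner ℂ (upperToeplitz S k j (x j)) (y k) := by
  have hterm : ∀ m l, inner ℂ (((starRingEnd ℂ) (ω ^ m) ^ l • S l) (∑ j ∈ F, (ω ^ m) ^ j • x j))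
        (∑ k ∈ G, (ω ^ m) ^ k • y k) =
      inner ℂ (∑ j ∈ F, (ω ^ m) ^ j • S l (x j)) (∑ k ∈ G, (ω ^ m) ^ (l + k) • y k) := by
    intro m l
    rw [smul_apply, inner_smul_left, ← inner_smul_right, map_pow, Complex.conj_conj, smul_sum]
    simp only [map_sum, map_smul, smul_smul, pow_add]
  simp only [_root_.sum_apply, sum_inner]
  rw [sum_comm]
  simp only [hterm]
  rw [sum_congr rfl fun l hl => hω.sum_inner_sum_pow_smul
      (fun j hj => by have := mem_range.1 (hF hj); omega)
      (fun k hk => by have := mem_range.1 (hG hk); have := mem_range.1 hl; omega) _ _,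
    ← mul_sum]
  refine congrArg _ ?_
  rw [sum_comm]
  refine sum_congr rfl fun k _ => ?_
  rw [sum_comm]
  exact sum_congr rfl fun j hj => sum_range_ite_inner_eq_upperToeplitz S (mem_range.1 (hF hj)) k _ _

theorem norm_sum_inner_upperToeplitz_le (S : ℕ → (E →L[ℂ] E)) {n : ℕ} {K : ℝ}
    (hK : ∀ z : ℂ, ‖z‖ = 1 → ‖∑ l ∈ range n, z ^ l • S l‖ ≤ K) {F G : Finset ℕ}
    (hF : F ⊆ range n) (hG : G ⊆ range n) (x y : ℕ → E) :
    ‖∑ k ∈ G, ∑ j ∈ F, inner ℂ (upperToeplitz S k j (x j)) (y k)‖ ≤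
      K * √(∑ j ∈ F, ‖x j‖ ^ 2) * √(∑ k ∈ G, ‖y k‖ ^ 2) := by
  set N := 2 * n + 1
  set ω := Complex.exp (2 * Real.pi * Complex.I / N)
  have hω : IsPrimitiveRoot ω N := Complex.isPrimitiveRoot_exp N (by omega)
  have hK0 : 0 ≤ K := (norm_nonneg _).trans (hK 1 norm_one)
  set f := fun m : ℕ => ∑ j ∈ F, (ω ^ m) ^ j • x j
  set g := fun m : ℕ => ∑ k ∈ G, (ω ^ m) ^ k • y k
  set P := fun z : ℂ => ∑ l ∈ range n, z ^ l • S l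
  have hbound : ‖∑ m ∈ range N, inner ℂ (P ((starRingEnd ℂ) (ω ^ m)) (f m)) (g m)‖ ≤
      K * √(∑ m ∈ range N, ‖f m‖ ^ 2) * √(∑ m ∈ range N, ‖g m‖ ^ 2) := by
    calc _ ≤ ∑ m ∈ range N, K * (‖f m‖ * ‖g m‖) := by
          refine (norm_sum_le _ _).trans (sum_le_sum fun m _ => ?_)
          refine (norm_inner_le_norm _ _).trans ?_
          rw [← mul_assoc]
          refine mul_le_mul_of_nonneg_right ((ContinuousLinearMap.le_opNorm _ _).trans
            (mul_le_mul_of_nonneg_right (hK _ ?_) (norm_nonneg _))) (norm_nonneg _)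
          rw [RCLike.norm_conj, norm_pow, hω.norm'_eq_one (by omega), one_pow]
      _ ≤ K * √(∑ m ∈ range N, ‖f m‖ ^ 2) * √(∑ m ∈ range N, ‖g m‖ ^ 2) := by
          rw [← mul_sum, mul_assoc]
          exact mul_le_mul_of_nonneg_left (Real.sum_mul_le_sqrt_mul_sqrt _ _ _) hK0
  have hF' : F ⊆ range N := hF.trans (range_mono (by omega))
  have hG' : G ⊆ range N := hG.trans (range_mono (by omega))
  rw [sum_inner_apply_sum_pow_smul_eq S hω (by omega) hF hG, hω.sum_norm_sq_sum_pow_smul hF',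
    hω.sum_norm_sq_sum_pow_smul hG', norm_mul, Complex.norm_natCast,
    Real.sqrt_mul (Nat.cast_nonneg _), Real.sqrt_mul (Nat.cast_nonneg _)] at hbound
  have hN : (0 : ℝ) < N := by positivity
  refine le_of_mul_le_mul_left ?_ hN
  linear_combination hbound + (K * √(∑ j ∈ F, ‖x j‖ ^ 2) * √(∑ k ∈ G, ‖y k‖ ^ 2)) *
    Real.mul_self_sqrt hN.le

end Sampling

section HardDirection

variable {E : Type*} [NormedAddCommGroup E] [InnerProductSpace ℂ E] [CompleteSpace E]
  {T : ℕ → (E →L[ℂ] E)} {M C : ℝ}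

theorem schurBoundedBy_upperToeplitz_pow_smul_of_norm_tsum_le (hM : ∀ l, ‖T l‖ ≤ M)
    (hC : ∀ z : ℂ, ‖z‖ < 1 → ‖∑' l, z ^ l • T l‖ ≤ C) {r : ℝ} (hr0 : 0 ≤ r) (hr1 : r < 1) :
    SchurBoundedBy (upperToeplitz fun l => (r : ℂ) ^ l • T l) C := by
  intro F G x y
  have hpoly : ∀ n, ∀ z : ℂ, ‖z‖ = 1 →
      ‖∑ l ∈ range n, z ^ l • (r : ℂ) ^ l • T l‖ ≤ C + M * r ^ n / (1 - r) := by
    intro n z hz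
    have hw : ‖(r : ℂ) * z‖ = r := by simp [hz, abs_of_nonneg hr0]
    have hw1 : ‖(r : ℂ) * z‖ < 1 := hw.le.trans_lt hr1
    have hsplit : ∑ l ∈ range n, z ^ l • (r : ℂ) ^ l • T l = ∑' l, ((r : ℂ) * z) ^ l • T l -
        (∑' l, ((r : ℂ) * z) ^ l • T l - ∑ l ∈ range n, ((r : ℂ) * z) ^ l • T l) := by
      simp [mul_pow, smul_smul, mul_comm]
    rw [hsplit]
    refine (norm_sub_le _ _).trans (add_le_add (hC _ hw1) ?_)
    simpa only [hw] using norm_tsum_pow_smul_sub_sum_range_le hM hw1 n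
  obtain ⟨n₀, hn₀⟩ := exists_nat_subset_range (F ∪ G)
  have hlim : Tendsto (fun n => (C + M * r ^ n / (1 - r)) * √(∑ j ∈ F, ‖x j‖ ^ 2) *
      √(∑ k ∈ G, ‖y k‖ ^ 2)) atTop (𝓝 (C * √(∑ j ∈ F, ‖x j‖ ^ 2) * √(∑ k ∈ G, ‖y k‖ ^ 2))) := by
    have := ((tendsto_pow_atTop_nhds_zero_of_lt_one hr0 hr1).const_mul M).div_const (1 - r)
    simpa using ((this.const_add C).mul_const _).mul_const _
  refine ge_of_tendsto hlim (eventually_atTop.2 ⟨n₀, fun n hn => ?_⟩)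
  have hsub : F ∪ G ⊆ range n := hn₀.trans (range_mono hn)
  exact norm_sum_inner_upperToeplitz_le _ (hpoly n) (subset_union_left.trans hsub)
    (subset_union_right.trans hsub) x y

theorem schurBoundedBy_upperToeplitz_of_norm_tsum_le (hM : ∀ l, ‖T l‖ ≤ M)
    (hC : ∀ z : ℂ, ‖z‖ < 1 → ‖∑' l, z ^ l • T l‖ ≤ C) : SchurBoundedBy (upperToeplitz T) C := by
  refine SchurBoundedBy.of_tendsto (l := 𝓝[<] (1 : ℝ))
    (A := fun r => upperToeplitz fun l => (r : ℂ) ^ l • T l) (fun k j => ?_) ?_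
  · unfold upperToeplitz
    split_ifs
    · simpa using (((Complex.continuous_ofReal.pow (j - k)).tendsto 1).mono_left
        nhdsWithin_le_nhds).smul_const (T (j - k))
    · exact tendsto_const_nhds
  · filter_upwards [Ioo_mem_nhdsLT zero_lt_one] with r hr
    exact schurBoundedBy_upperToeplitz_pow_smul_of_norm_tsum_le hM hC hr.1.le hr.2

end HardDirection

/-- For an upper triangular Toeplitz matrix `A = (T_{j−k})` with `sup_l ‖T_l‖ < ∞` and
`G_A(z) = ∑_{l≥0} T_l z^l`: `A ∈ B(ℓ²(H))` iff `G_A ∈ H^∞(𝔻,B(H))`, and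
`‖A‖_{B(ℓ²(H))} = sup_{|z|<1} ‖G_A(z)‖` (expressed via: for every `C ≥ 0`, the bounds
agree). -/
theorem uppertriangular_toeplitz_Hinfty (T : ℕ → (H →L[ℂ] H))
    (hbdd : ∃ M : ℝ, ∀ l : ℕ, ‖T l‖ ≤ M) :
    (MemB (fun k j => if k ≤ j then T (j - k) else 0) ↔
        ∃ C : ℝ, ∀ z : ℂ, ‖z‖ < 1 → ‖∑' l : ℕ, z ^ l • T l‖ ≤ C) ∧
      ∀ C : ℝ, 0 ≤ C →
        (SchurBoundedBy (fun k j => if k ≤ j then T (j - k) else 0) C ↔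
          ∀ z : ℂ, ‖z‖ < 1 → ‖∑' l : ℕ, z ^ l • T l‖ ≤ C) := by
  obtain ⟨M, hM⟩ := hbdd
  have hiff : ∀ C : ℝ, 0 ≤ C → (SchurBoundedBy (upperToeplitz T) C ↔
      ∀ z : ℂ, ‖z‖ < 1 → ‖∑' l : ℕ, z ^ l • T l‖ ≤ C) := fun C hC =>
    ⟨fun hA _ hz => norm_tsum_pow_smul_le_of_schurBoundedBy hM hC hA hz,
      schurBoundedBy_upperToeplitz_of_norm_tsum_le hM⟩
  refine ⟨⟨fun ⟨C, hC, hA⟩ => ⟨C, (hiff C hC).1 hA⟩, fun ⟨C, hG⟩ => ?_⟩, hiff⟩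
  have hC : 0 ≤ C := (norm_nonneg _).trans (hG 0 (by simp))
  exact ⟨C, hC, (hiff C hC).2 hG⟩
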